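/- Let P be a partial order viewed as a category. The Eilenberg–Moore category of the Isbell monad T = H_* ∘ H^* on the presheaf category Pᵒᵖ ⥤ Type is equivalent to the Dedekind–MacNeille completion of P viewed as a (thin) category, i.e., to the preorder category of the complete lattice of pairs (L, U) of subsets of P such that L is exactly the set of lower bounds of U and U is exactly the set of upper bounds of L (the concept lattice of the relation ≤ on P). Likewise, the Eilenberg–Moore category of coalgebras for the comonad H^* ∘ H_* on (P ⥤ Type)ᵒᵖ is equivalent to the same complete lattice viewed as a category. -/

import Mathlib

open CategoryTheory CategoryTheory.Limits Opposite

universe u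

namespace DMCat

variable {A B : Type u} [SmallCategory A] [SmallCategory B]

/-- The presheaf `Φ(-, b)` associated to a profunctor `Φ : Aᵒᵖ × B ⥤ Type u`. -/
def curryR (Φ : Aᵒᵖ × B ⥤ Type u) (b : B) : Aᵒᵖ ⥤ Type u :=
  (Functor.curry.obj Φ).flip.obj b

/-- The postsheaf `Φ(a, -)` associated to a profunctor `Φ : Aᵒᵖ × B ⥤ Type u`. -/
def curryL (Φ : Aᵒᵖ × B ⥤ Type u) (a : Aᵒᵖ) : B ⥤ Type u :=
  (Functor.curry.obj Φ).obj a

/-- The left extension `Φ^* : (Aᵒᵖ ⥤ Type u) ⥤ (B ⥤ Type u)ᵒᵖ`,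
`(Φ^* α)(b) = Nat(α, Φ(-, b))`. -/
def upper (Φ : Aᵒᵖ × B ⥤ Type u) : (Aᵒᵖ ⥤ Type u) ⥤ (B ⥤ Type u)ᵒᵖ where
  obj α := op
    { obj := fun b => α ⟶ curryR Φ b
      map := fun {b b'} g => TypeCat.ofHom (fun t => t ≫ (Functor.curry.obj Φ).flip.map g)
      map_id := by
        intro b
        ext t : 3
        simp [curryR] ; rfl
      map_comp := by
        intro b b' b'' g g'
        ext t : 3
        simp [curryR] ; rfl }
  map {α α'} f := Quiver.Hom.op
    { app := fun b => TypeCat.ofHom (fun t => f ≫ t)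
      naturality := by intro b b' g; ext t : 3; exact (Category.assoc _ _ _).symm }
  map_id := by intro α; apply Quiver.Hom.unop_inj; ext b t; simp
  map_comp := by intro α α' α'' f f'; apply Quiver.Hom.unop_inj; ext b t; simp

/-- The right extension `Φ_* : (B ⥤ Type u)ᵒᵖ ⥤ (Aᵒᵖ ⥤ Type u)`,
`(Φ_* β)(a) = Nat(β, Φ(a, -))`. -/
def lower (Φ : Aᵒᵖ × B ⥤ Type u) : (B ⥤ Type u)ᵒᵖ ⥤ (Aᵒᵖ ⥤ Type u) where
  obj β :=
    { obj := fun a => β.unop ⟶ curryL Φ a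
      map := fun {a a'} f => TypeCat.ofHom (fun t => t ≫ (Functor.curry.obj Φ).map f)
      map_id := by intro a; ext t : 3; simp [curryL] ; rfl
      map_comp := by intro a a' a'' f f'; ext t : 3; simp [curryL] ; rfl }
  map {β β'} f :=
    { app := fun a => TypeCat.ofHom (fun t => f.unop ≫ t)
      naturality := by intro a a' g; ext t : 3; exact (Category.assoc _ _ _).symm }
  map_id := by intro β; ext a t; simp
  map_comp := by intro β β' β'' f f'; ext a t; simp

/-- The adjunction `Φ^* ⊣ Φ_*`. -/
def matrixAdj (Φ : Aᵒᵖ × B ⥤ Type u) : upper Φ ⊣ lower Φ :=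
  Adjunction.mkOfHomEquiv
    { homEquiv := fun α β =>
        { toFun := fun t =>
            { app := fun a => TypeCat.ofHom fun x =>
                { app := fun b => TypeCat.ofHom fun y => ((t.unop.app b y).app a x : Φ.obj (a, b))
                  naturality := by
                    intro b b' g
                    ext y : 3
                    have h1 := ConcreteCategory.congr_hom (t.unop.naturality g) y
                    have h2 := ConcreteCategory.congr_hom ((t.unop.app b y).naturality (𝟙 a))
                    exact ConcreteCategory.congr_hom (NatTrans.congr_app h1 a) x }
              naturality := by
                intro a a' f
                ext x : 3
                apply NatTrans.ext
                funext b; ext y : 3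
                have := ConcreteCategory.congr_hom ((t.unop.app b y).naturality f) x
                exact this }
          invFun := fun s => Quiver.Hom.op
            { app := fun b => TypeCat.ofHom fun y =>
                { app := fun a => TypeCat.ofHom fun x => ((s.app a x).app b y : Φ.obj (a, b))
                  naturality := by
                    intro a a' f
                    ext x : 3
                    have := ConcreteCategory.congr_hom (s.naturality f) x
                    exact ConcreteCategory.congr_hom (NatTrans.congr_app this b) y }
              naturality := by
                intro b b' g
                ext y : 3
                apply NatTrans.ext
                funext a; ext x : 3
                have := ConcreteCategory.congr_hom ((s.app a x).naturality g) y
                exact this }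
          left_inv := by
            intro t
            apply Quiver.Hom.unop_inj
            apply NatTrans.ext
            funext b
            ext y : 3
            apply NatTrans.ext
            funext a; ext x : 3
            rfl
          right_inv := by
            intro s
            apply NatTrans.ext
            funext a
            ext x : 3
            apply NatTrans.ext
            funext b; ext y : 3
            rfl }
      homEquiv_naturality_left_symm := by
        intro α α' β f g
        apply Quiver.Hom.unop_inj
        apply NatTrans.ext
        funext b; ext y : 3
        apply NatTrans.ext
        funext a; ext x : 3
        rfl
      homEquiv_naturality_right := by
        intro α β β' f g
        apply NatTrans.ext
        funext a
        ext x : 3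
        apply NatTrans.ext
        funext b; ext y : 3
        rfl }

end DMCat

namespace DMCat

/-- The Isbell adjunction of a category `C`: the matrix adjunction of its hom profunctor. -/
def isbellAdj (C : Type u) [SmallCategory C] :
    upper (Functor.hom C) ⊣ lower (Functor.hom C) :=
  matrixAdj (Functor.hom C)

/-- The Dedekind–MacNeille completion of a partial order `P`: pairs `(L, U)` of subsets of `P`
with `L = lowerBounds U` and `U = upperBounds L`, ordered by inclusion of the `L`-components. -/
def DMpair (P : Type u) [PartialOrder P] : Type u :=
  {LU : Set P × Set P // LU.1 = lowerBounds LU.2 ∧ LU.2 = upperBounds LU.1}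

instance (P : Type u) [PartialOrder P] : PartialOrder (DMpair P) :=
  PartialOrder.lift (fun c => c.val.1) (by
    intro c d h
    apply Subtype.ext
    apply Prod.ext h
    rw [c.prop.2, d.prop.2]
    exact congrArg upperBounds h)

end DMCat


namespace DMCat

section PosetIsbell

variable {P : Type u} [PartialOrder P]

/-- Support of a presheaf. -/
def suppPre (α : Pᵒᵖ ⥤ Type u) : Set P := {x | Nonempty (α.obj (op x))}

/-- Support of a postsheaf. -/
def suppPost (β : P ⥤ Type u) : Set P := {b | Nonempty (β.obj b)}

instance subCurryR (b : P) (x : Pᵒᵖ) : Subsingleton ((curryR (Functor.hom P) b).obj x) :=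
  show Subsingleton (x.unop ⟶ b) from inferInstance

instance subCurryL (a : Pᵒᵖ) (b : P) : Subsingleton ((curryL (Functor.hom P) a).obj b) :=
  show Subsingleton (a.unop ⟶ b) from inferInstance

instance subHomType {C : Type u} [SmallCategory C] (F G : C ⥤ Type u)
    [∀ c, Subsingleton (G.obj c)] : Subsingleton (F ⟶ G) :=
  ⟨fun s t => by
    apply NatTrans.ext; funext c
    exact ConcreteCategory.hom_ext _ _ fun x => Subsingleton.elim _ _⟩

instance subUpper (α : Pᵒᵖ ⥤ Type u) (b : P) :
    Subsingleton ((((upper (Functor.hom P)).obj α).unop).obj b) :=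
  show Subsingleton (α ⟶ curryR (Functor.hom P) b) from inferInstance

instance subLower (β : (P ⥤ Type u)ᵒᵖ) (x : Pᵒᵖ) :
    Subsingleton (((lower (Functor.hom P)).obj β).obj x) :=
  show Subsingleton (β.unop ⟶ curryL (Functor.hom P) x) from inferInstance

instance subT (α : Pᵒᵖ ⥤ Type u) (x : Pᵒᵖ) :
    Subsingleton (((isbellAdj P).toMonad.obj α).obj x) :=
  show Subsingleton (((lower (Functor.hom P)).obj ((upper (Functor.hom P)).obj α)).obj x)
    from inferInstance

instance subS (V : (P ⥤ Type u)ᵒᵖ) (b : P) :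
    Subsingleton ((((isbellAdj P).toComonad.obj V).unop).obj b) :=
  show Subsingleton ((((upper (Functor.hom P)).obj ((lower (Functor.hom P)).obj V)).unop).obj b)
    from inferInstance

lemma upper_nonempty (α : Pᵒᵖ ⥤ Type u) (b : P) :
    Nonempty (α ⟶ curryR (Functor.hom P) b) ↔ b ∈ upperBounds (suppPre α) := by
  constructor
  · rintro ⟨t⟩ a ha
    exact ha.elim fun x => leOfHom (show a ⟶ b from t.app (op a) x)
  · intro h
    exact ⟨{ app := fun a => TypeCat.ofHom fun x => show a.unop ⟶ b from homOfLE (h ⟨x⟩)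
             naturality := fun _ _ _ => ConcreteCategory.hom_ext _ _ fun _ => Subsingleton.elim _ _ }⟩

lemma lower_nonempty (β : P ⥤ Type u) (a : P) :
    Nonempty (β ⟶ curryL (Functor.hom P) (op a)) ↔ a ∈ lowerBounds (suppPost β) := by
  constructor
  · rintro ⟨t⟩ b hb
    exact hb.elim fun y => leOfHom (show a ⟶ b from t.app b y)
  · intro h
    exact ⟨{ app := fun b => TypeCat.ofHom fun y => show a ⟶ b from homOfLE (h ⟨y⟩)
             naturality := fun _ _ _ => ConcreteCategory.hom_ext _ _ fun _ => Subsingleton.elim _ _ }⟩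

lemma suppPre_lower (β : (P ⥤ Type u)ᵒᵖ) :
    suppPre ((lower (Functor.hom P)).obj β) = lowerBounds (suppPost β.unop) :=
  Set.ext fun a => lower_nonempty β.unop a

lemma suppPost_upper (α : Pᵒᵖ ⥤ Type u) :
    suppPost (((upper (Functor.hom P)).obj α).unop) = upperBounds (suppPre α) :=
  Set.ext fun b => upper_nonempty α b

lemma T_nonempty (α : Pᵒᵖ ⥤ Type u) (x : P) :
    Nonempty (((isbellAdj P).toMonad.obj α).obj (op x)) ↔
      x ∈ lowerBounds (upperBounds (suppPre α)) := by
  rw [← suppPost_upper]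
  exact lower_nonempty (((upper (Functor.hom P)).obj α).unop) x

lemma S_nonempty (V : (P ⥤ Type u)ᵒᵖ) (b : P) :
    Nonempty ((((isbellAdj P).toComonad.obj V).unop).obj b) ↔
      b ∈ upperBounds (lowerBounds (suppPost V.unop)) := by
  rw [← suppPre_lower]
  exact upper_nonempty ((lower (Functor.hom P)).obj V) b

lemma algebra_subsingleton (A : (isbellAdj P).toMonad.Algebra) (x : Pᵒᵖ) :
    Subsingleton (A.A.obj x) := by
  constructor
  intro u v
  have hu := ConcreteCategory.congr_hom (NatTrans.congr_app A.unit x) u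
  have hv := ConcreteCategory.congr_hom (NatTrans.congr_app A.unit x) v
  simp only [NatTrans.comp_app, types_comp_apply, NatTrans.id_app, types_id_apply] at hu hv
  change _ = u at hu
  change _ = v at hv
  rw [← hu, ← hv]
  exact congrArg (A.a.app x) (Subsingleton.elim _ _)

instance algHomSub (A B : (isbellAdj P).toMonad.Algebra) : Subsingleton (A ⟶ B) :=
  ⟨fun s t => by
    apply Monad.Algebra.Hom.ext
    haveI := algebra_subsingleton B
    exact Subsingleton.elim s.f t.f⟩

lemma algebra_supp (A : (isbellAdj P).toMonad.Algebra) :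
    lowerBounds (upperBounds (suppPre A.A)) = suppPre A.A := by
  apply Set.Subset.antisymm
  · intro x hx
    exact ((T_nonempty A.A x).mpr hx).elim fun t => ⟨A.a.app (op x) t⟩
  · exact subset_lowerBounds_upperBounds _

/-- The functor from Isbell algebras to the Dedekind–MacNeille completion. -/
def algToDM : (isbellAdj P).toMonad.Algebra ⥤ DMpair P where
  obj A := ⟨(suppPre A.A, upperBounds (suppPre A.A)), (algebra_supp A).symm, rfl⟩
  map {A B} f := homOfLE (by
    intro x hx
    exact hx.elim fun u => ⟨f.f.app (op x) u⟩)
  map_id _ := Subsingleton.elim _ _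
  map_comp _ _ := Subsingleton.elim _ _

lemma dm_lower_mem (c : DMpair P) {x y : P} (h : y ≤ x) (hx : x ∈ c.val.1) : y ∈ c.val.1 := by
  rw [c.prop.1] at hx ⊢
  exact fun u hu => h.trans (hx hu)

lemma dm_upper_mem (c : DMpair P) {x y : P} (h : x ≤ y) (hx : x ∈ c.val.2) : y ∈ c.val.2 := by
  rw [c.prop.2] at hx ⊢
  exact fun u hu => (hx hu).trans h

lemma dm_closed (c : DMpair P) : lowerBounds (upperBounds c.val.1) = c.val.1 := by
  rw [← c.prop.2, ← c.prop.1]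

lemma dm_closed' (c : DMpair P) : upperBounds (lowerBounds c.val.2) = c.val.2 := by
  rw [← c.prop.1, ← c.prop.2]

/-- The presheaf associated to a Dedekind–MacNeille pair. -/
def preOf (c : DMpair P) : Pᵒᵖ ⥤ Type u where
  obj x := ULift (PLift (x.unop ∈ c.val.1))
  map {x y} f := TypeCat.ofHom fun t => ⟨⟨dm_lower_mem c (leOfHom f.unop) t.down.down⟩⟩
  map_id _ := ConcreteCategory.hom_ext _ _ fun _ => Subsingleton.elim _ _
  map_comp _ _ := ConcreteCategory.hom_ext _ _ fun _ => Subsingleton.elim _ _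

instance subPreOf (c : DMpair P) (x : Pᵒᵖ) : Subsingleton ((preOf c).obj x) :=
  show Subsingleton (ULift (PLift _)) from inferInstance

lemma suppPre_preOf (c : DMpair P) : suppPre (preOf c) = c.val.1 :=
  Set.ext fun x => ⟨fun h => h.elim fun t => t.down.down, fun h => ⟨⟨⟨h⟩⟩⟩⟩

/-- The Isbell algebra associated to a Dedekind–MacNeille pair. -/
def dmAlg (c : DMpair P) : (isbellAdj P).toMonad.Algebra where
  A := preOf c
  a :=
    { app := fun x => TypeCat.ofHom fun t => ⟨⟨by
        have h := (T_nonempty (preOf c) x.unop).mp ⟨t⟩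
        rwa [suppPre_preOf, dm_closed] at h⟩⟩
      naturality := fun _ _ _ => ConcreteCategory.hom_ext _ _ fun _ => Subsingleton.elim _ _ }
  unit := by
    apply NatTrans.ext; funext x
    exact ConcreteCategory.hom_ext _ _ fun t => Subsingleton.elim _ _
  assoc := by
    apply NatTrans.ext; funext x
    exact ConcreteCategory.hom_ext _ _ fun t => Subsingleton.elim _ _

instance subDmAlg (c : DMpair P) (x : Pᵒᵖ) : Subsingleton ((dmAlg c).A.obj x) :=
  subPreOf c x

/-- The functor from the Dedekind–MacNeille completion to Isbell algebras. -/
def dmToAlg : DMpair P ⥤ (isbellAdj P).toMonad.Algebra where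
  obj := dmAlg
  map {c d} f :=
    { f :=
        { app := fun x => TypeCat.ofHom fun t => ⟨⟨leOfHom f t.down.down⟩⟩
          naturality := fun _ _ _ => ConcreteCategory.hom_ext _ _ fun _ => Subsingleton.elim _ _ }
      h := by
        apply NatTrans.ext; funext x
        exact ConcreteCategory.hom_ext _ _ fun t => Subsingleton.elim _ _ }
  map_id _ := Subsingleton.elim _ _
  map_comp _ _ := Subsingleton.elim _ _

instance subDmToAlg (c : DMpair P) (x : Pᵒᵖ) : Subsingleton ((dmToAlg.obj c).A.obj x) :=
  subPreOf c x

lemma algToDM_dmToAlg (c : DMpair P) : algToDM.obj (dmToAlg.obj c) = c := by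
  apply Subtype.ext
  apply Prod.ext
  · exact suppPre_preOf c
  · show upperBounds (suppPre (preOf c)) = c.val.2
    rw [suppPre_preOf]
    exact c.prop.2.symm

/-- The unit isomorphism component for the algebra equivalence. -/
noncomputable def algUnitIso (A : (isbellAdj P).toMonad.Algebra) : A ≅ dmToAlg.obj (algToDM.obj A) where
  hom :=
    { f :=
        { app := fun x => TypeCat.ofHom fun u => ⟨⟨⟨u⟩⟩⟩
          naturality := fun _ _ _ => ConcreteCategory.hom_ext _ _ fun _ => Subsingleton.elim _ _ }
      h := by
        apply NatTrans.ext; funext x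
        exact ConcreteCategory.hom_ext _ _ fun t => Subsingleton.elim _ _ }
  inv :=
    { f :=
        { app := fun x => TypeCat.ofHom fun t => Classical.choice t.down.down
          naturality := fun _ _ _ => by
            haveI := algebra_subsingleton A
            exact ConcreteCategory.hom_ext _ _ fun _ => Subsingleton.elim _ _ }
      h := by
        haveI := algebra_subsingleton A
        apply NatTrans.ext; funext x
        exact ConcreteCategory.hom_ext _ _ fun t => Subsingleton.elim _ _ }
  hom_inv_id := Subsingleton.elim _ _
  inv_hom_id := Subsingleton.elim _ _

/-- The equivalence between Isbell algebras and the Dedekind–MacNeille completion. -/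
noncomputable def algEquiv : (isbellAdj P).toMonad.Algebra ≌ DMpair P :=
  CategoryTheory.Equivalence.mk algToDM dmToAlg
    (NatIso.ofComponents (fun A => algUnitIso A) (fun _ => Subsingleton.elim _ _))
    (NatIso.ofComponents (fun c => eqToIso (algToDM_dmToAlg c)) (fun _ => Subsingleton.elim _ _))

/- ### The comonad side -/

lemma coalgebra_subsingleton (V : (isbellAdj P).toComonad.Coalgebra) (b : P) :
    Subsingleton (V.A.unop.obj b) := by
  constructor
  intro u v
  have h := congrArg Quiver.Hom.unop V.counit
  simp only [unop_comp, unop_id] at h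
  have hu := ConcreteCategory.congr_hom (NatTrans.congr_app h b) u
  have hv := ConcreteCategory.congr_hom (NatTrans.congr_app h b) v
  simp only [NatTrans.comp_app, types_comp_apply, NatTrans.id_app, types_id_apply] at hu hv
  change _ = u at hu
  change _ = v at hv
  rw [← hu, ← hv]
  exact congrArg (V.a.unop.app b) (Subsingleton.elim _ _)

instance coalgHomSub (V W : (isbellAdj P).toComonad.Coalgebra) : Subsingleton (V ⟶ W) :=
  ⟨fun s t => by
    apply Comonad.Coalgebra.Hom.ext
    apply Quiver.Hom.unop_inj
    haveI := coalgebra_subsingleton V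
    apply NatTrans.ext; funext b
    exact ConcreteCategory.hom_ext _ _ fun y => Subsingleton.elim _ _⟩

lemma coalgebra_supp (V : (isbellAdj P).toComonad.Coalgebra) :
    upperBounds (lowerBounds (suppPost V.A.unop)) = suppPost V.A.unop := by
  apply Set.Subset.antisymm
  · intro b hb
    exact ((S_nonempty V.A b).mpr hb).elim fun t => ⟨V.a.unop.app b t⟩
  · exact subset_upperBounds_lowerBounds _

/-- The functor from Isbell coalgebras to the Dedekind–MacNeille completion. -/
def coalgToDM : (isbellAdj P).toComonad.Coalgebra ⥤ DMpair P where
  obj V := ⟨(lowerBounds (suppPost V.A.unop), suppPost V.A.unop), rfl, (coalgebra_supp V).symm⟩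
  map {V W} f := homOfLE (by
    intro x hx b hb
    exact hx (hb.elim fun y => ⟨f.f.unop.app b y⟩))
  map_id _ := Subsingleton.elim _ _
  map_comp _ _ := Subsingleton.elim _ _

/-- The postsheaf associated to a Dedekind–MacNeille pair. -/
def postOf (c : DMpair P) : P ⥤ Type u where
  obj b := ULift (PLift (b ∈ c.val.2))
  map {b b'} f := TypeCat.ofHom fun t => ⟨⟨dm_upper_mem c (leOfHom f) t.down.down⟩⟩
  map_id _ := ConcreteCategory.hom_ext _ _ fun _ => Subsingleton.elim _ _
  map_comp _ _ := ConcreteCategory.hom_ext _ _ fun _ => Subsingleton.elim _ _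

instance subPostOf (c : DMpair P) (b : P) : Subsingleton ((postOf c).obj b) :=
  show Subsingleton (ULift (PLift _)) from inferInstance

lemma suppPost_postOf (c : DMpair P) : suppPost (postOf c) = c.val.2 :=
  Set.ext fun b => ⟨fun h => h.elim fun t => t.down.down, fun h => ⟨⟨⟨h⟩⟩⟩⟩

/-- The Isbell coalgebra associated to a Dedekind–MacNeille pair. -/
def dmCoalg (c : DMpair P) : (isbellAdj P).toComonad.Coalgebra where
  A := op (postOf c)
  a := Quiver.Hom.op
    (show (((isbellAdj P).toComonad.obj (op (postOf c))).unop) ⟶ postOf c from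
      { app := fun b => TypeCat.ofHom fun t => ⟨⟨by
          have h := (S_nonempty (op (postOf c)) b).mp ⟨t⟩
          rwa [show (op (postOf c)).unop = postOf c from rfl, suppPost_postOf, dm_closed'] at h⟩⟩
        naturality := fun _ _ _ => ConcreteCategory.hom_ext _ _ fun _ => Subsingleton.elim _ _ })
  counit := by
    apply Quiver.Hom.unop_inj
    apply NatTrans.ext; funext b
    exact ConcreteCategory.hom_ext _ _ fun t => Subsingleton.elim _ _
  coassoc := by
    apply Quiver.Hom.unop_inj
    apply NatTrans.ext; funext b
    exact ConcreteCategory.hom_ext _ _ fun t => Subsingleton.elim _ _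

instance subDmCoalg (c : DMpair P) (b : P) : Subsingleton (((dmCoalg c).A.unop).obj b) :=
  subPostOf c b

lemma dm_le_upper {c d : DMpair P} (h : c ⟶ d) : d.val.2 ⊆ c.val.2 := by
  rw [c.prop.2, d.prop.2]
  exact upperBounds_mono_set (leOfHom h)

/-- The functor from the Dedekind–MacNeille completion to Isbell coalgebras. -/
def dmToCoalg : DMpair P ⥤ (isbellAdj P).toComonad.Coalgebra where
  obj := dmCoalg
  map {c d} f :=
    { f := Quiver.Hom.op
        (show postOf d ⟶ postOf c from
          { app := fun b => TypeCat.ofHom fun t => ⟨⟨dm_le_upper f t.down.down⟩⟩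
            naturality := fun _ _ _ => ConcreteCategory.hom_ext _ _ fun _ => Subsingleton.elim _ _ })
      h := by
        apply Quiver.Hom.unop_inj
        apply NatTrans.ext; funext b
        exact ConcreteCategory.hom_ext _ _ fun t => Subsingleton.elim _ _ }
  map_id _ := Subsingleton.elim _ _
  map_comp _ _ := Subsingleton.elim _ _

instance subDmToCoalg (c : DMpair P) (b : P) :
    Subsingleton (((dmToCoalg.obj c).A.unop).obj b) :=
  subPostOf c b

lemma coalgToDM_dmToCoalg (c : DMpair P) : coalgToDM.obj (dmToCoalg.obj c) = c := by
  apply Subtype.ext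
  apply Prod.ext
  · show lowerBounds (suppPost (postOf c)) = c.val.1
    rw [suppPost_postOf]
    exact c.prop.1.symm
  · exact suppPost_postOf c

/-- The unit isomorphism component for the coalgebra equivalence. -/
noncomputable def coalgUnitIso (V : (isbellAdj P).toComonad.Coalgebra) :
    V ≅ dmToCoalg.obj (coalgToDM.obj V) where
  hom :=
    { f := Quiver.Hom.op
        (show postOf (coalgToDM.obj V) ⟶ V.A.unop from
          { app := fun b => TypeCat.ofHom fun t => Classical.choice t.down.down
            naturality := fun _ _ _ => by
              haveI := coalgebra_subsingleton V
              exact ConcreteCategory.hom_ext _ _ fun _ => Subsingleton.elim _ _ })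
      h := by
        haveI := coalgebra_subsingleton V
        apply Quiver.Hom.unop_inj
        apply NatTrans.ext; funext b
        exact ConcreteCategory.hom_ext _ _ fun t => Subsingleton.elim _ _ }
  inv :=
    { f := Quiver.Hom.op
        (show V.A.unop ⟶ postOf (coalgToDM.obj V) from
          { app := fun b => TypeCat.ofHom fun y => ⟨⟨⟨y⟩⟩⟩
            naturality := fun _ _ _ => ConcreteCategory.hom_ext _ _ fun _ => Subsingleton.elim _ _ })
      h := by
        apply Quiver.Hom.unop_inj
        apply NatTrans.ext; funext b
        exact ConcreteCategory.hom_ext _ _ fun t => Subsingleton.elim _ _ }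
  hom_inv_id := Subsingleton.elim _ _
  inv_hom_id := Subsingleton.elim _ _

/-- The equivalence between Isbell coalgebras and the Dedekind–MacNeille completion. -/
noncomputable def coalgEquiv : (isbellAdj P).toComonad.Coalgebra ≌ DMpair P :=
  CategoryTheory.Equivalence.mk coalgToDM dmToCoalg
    (NatIso.ofComponents (fun V => coalgUnitIso V) (fun _ => Subsingleton.elim _ _))
    (NatIso.ofComponents (fun c => eqToIso (coalgToDM_dmToCoalg c))
      (fun _ => Subsingleton.elim _ _))

end PosetIsbell

end DMCat

open DMCat

/-- For a partial order `P`, the Eilenberg–Moore category of the Isbell monad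
`T = H_* ∘ H^*` on presheaves `Pᵒᵖ ⥤ Type` is equivalent to the Dedekind–MacNeille completion
of `P` viewed as a thin category, and likewise for the category of coalgebras of the comonad
`H^* ∘ H_*` on `(P ⥤ Type)ᵒᵖ`. -/
theorem isbell_algebras_on_poset_are_dedekind_macneille (P : Type u) [PartialOrder P] :
    Nonempty ((isbellAdj P).toMonad.Algebra ≌ DMpair P) ∧
      Nonempty ((isbellAdj P).toComonad.Coalgebra ≌ DMpair P) := by
  exact ⟨⟨algEquiv⟩, ⟨coalgEquiv⟩⟩
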